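/- arXiv:1807.11706 — 6 statements merged into one kernel-verified Lean document; each statement's English description precedes it below -/
import Mathlib

section
/- Suppose u, v : ℕ → H and μ : ℕ → ℝ form a GCM trajectory and μ_t < 1/L for every t. Then for every t ∈ ℕ one has Ψ(u_{t+1}) ≤ Ψ(v_{t+1}) ≤ Ψ(u_t); in particular the sequence of objective values (Ψ(u_t))_{t∈ℕ} is non-increasing. -/
open Filter Topology RealInnerProductSpace

/-- `uplus` is a prox-output at `(v, μ)`: it is a global minimizer over `H` of
`w ↦ φ(w) + ⟪∇f(v), w − v⟫ + (1/(2μ))‖w − v‖²`. -/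
def IsProxOutput {H : Type*} [NormedAddCommGroup H] [InnerProductSpace ℝ H]
    (φ : H → ℝ) (gradf : H → H) (v : H) (μ : ℝ) (uplus : H) : Prop :=
  ∀ w : H,
    φ uplus + ⟪gradf v, uplus - v⟫ + 1 / (2 * μ) * ‖uplus - v‖ ^ 2 ≤
      φ w + ⟪gradf v, w - v⟫ + 1 / (2 * μ) * ‖w - v‖ ^ 2

lemma descent_lemma {H : Type*} [NormedAddCommGroup H] [InnerProductSpace ℝ H] [CompleteSpace H]
    (f : H → ℝ) (gradf : H → H) (L : ℝ) (hL : 0 ≤ L)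
    (hdiff : ∀ x, HasGradientAt f (gradf x) x)
    (hlip : ∀ x y, ‖gradf x - gradf y‖ ≤ L * ‖x - y‖) (x y : H) :
    f y ≤ f x + ⟪gradf x, y - x⟫ + L / 2 * ‖y - x‖ ^ 2 := by
  set d := y - x with hd
  set h : ℝ → ℝ := fun t => f (x + t • d) - t * ⟪gradf x, d⟫ - L * t ^ 2 / 2 * ‖d‖ ^ 2 with hh
  have hcurve : ∀ t : ℝ, HasDerivAt (fun s : ℝ => x + s • d) d t := by
    intro t
    simpa using ((hasDerivAt_id t).smul_const d).const_add x
  have hderiv : ∀ t : ℝ, HasDerivAt h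
      (⟪gradf (x + t • d), d⟫ - ⟪gradf x, d⟫ - L * t * ‖d‖ ^ 2) t := by
    intro t
    have h1 : HasDerivAt (fun s : ℝ => f (x + s • d)) ⟪gradf (x + t • d), d⟫ t := by
      have := ((hdiff (x + t • d)).hasFDerivAt.comp t (hcurve t).hasFDerivAt)
      have h1' := this.hasDerivAt
      simp [InnerProductSpace.toDual] at h1'
      exact h1'
    have h2 : HasDerivAt (fun s : ℝ => s * ⟪gradf x, d⟫) ⟪gradf x, d⟫ t := by
      simpa using (hasDerivAt_id t).mul_const (⟪gradf x, d⟫)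
    have h3 : HasDerivAt (fun s : ℝ => L * s ^ 2 / 2 * ‖d‖ ^ 2) (L * t * ‖d‖ ^ 2) t := by
      have : HasDerivAt (fun s : ℝ => s ^ 2) (2 * t) t := by
        simpa using hasDerivAt_pow 2 t
      have := ((this.const_mul L).div_const 2).mul_const (‖d‖ ^ 2)
      exact this.congr_deriv (by ring)
    have h4 := (h1.sub h2).sub h3
    exact h4
  have hanti : AntitoneOn h (Set.Icc 0 1) := by
    apply antitoneOn_of_deriv_nonpos (convex_Icc 0 1)
    · exact fun t _ => (hderiv t).continuousAt.continuousWithinAt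
    · exact fun t _ => (hderiv t).differentiableAt.differentiableWithinAt
    · intro t ht
      rw [interior_Icc] at ht
      rw [(hderiv t).deriv]
      have key : ⟪gradf (x + t • d) - gradf x, d⟫ ≤ L * t * ‖d‖ ^ 2 := by
        calc ⟪gradf (x + t • d) - gradf x, d⟫ ≤ ‖gradf (x + t • d) - gradf x‖ * ‖d‖ :=
              real_inner_le_norm _ _
          _ ≤ (L * ‖(x + t • d) - x‖) * ‖d‖ := by
              gcongr; exact hlip _ _
          _ = L * t * ‖d‖ ^ 2 := by
              rw [add_sub_cancel_left, norm_smul, Real.norm_eq_abs, abs_of_pos ht.1]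
              ring
      rw [inner_sub_left] at key
      linarith
  have := hanti (Set.mem_Icc.2 ⟨le_refl 0, zero_le_one⟩) (Set.mem_Icc.2 ⟨zero_le_one, le_refl 1⟩) zero_le_one
  simp only [hh, zero_smul, add_zero, one_smul, zero_mul, zero_pow, sub_zero, mul_zero,
    one_pow, mul_one, zero_div] at this
  have hxy : x + d = y := by simp [hd]
  rw [hxy] at this
  linarith

/-- along a GCM trajectory with step sizes `μ t < 1/L`, one has
`Ψ(u_{t+1}) ≤ Ψ(v_{t+1}) ≤ Ψ(u_t)` for every `t`; in particular the sequence of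
objective values `Ψ(u_t)` is non-increasing. -/
theorem gcm_objective_nonincreasing
    {H : Type*} [NormedAddCommGroup H] [InnerProductSpace ℝ H] [CompleteSpace H]
    (f φ : H → ℝ) (gradf : H → H) (L : ℝ) (hL : 0 < L)
    (hdiff : ∀ x, HasGradientAt f (gradf x) x)
    (hlip : ∀ x y, ‖gradf x - gradf y‖ ≤ L * ‖x - y‖)
    (Ψ : H → ℝ) (hΨ : Ψ = fun x => f x + φ x)
    (u v : ℕ → H) (μ : ℕ → ℝ)
    (hμpos : ∀ t, 0 < μ t)
    (hcorr : ∀ t, Ψ (v (t + 1)) ≤ Ψ (u t))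
    (hprox : ∀ t, IsProxOutput φ gradf (v (t + 1)) (μ t) (u (t + 1)))
    (hμlt : ∀ t, μ t < 1 / L) :
    (∀ t : ℕ, Ψ (u (t + 1)) ≤ Ψ (v (t + 1)) ∧ Ψ (v (t + 1)) ≤ Ψ (u t)) ∧
      Antitone fun t => Ψ (u t) := by
  have key : ∀ t : ℕ, Ψ (u (t + 1)) ≤ Ψ (v (t + 1)) := by
    intro t
    have hp := hprox t (v (t + 1))
    simp only [sub_self, inner_zero_right, norm_zero, add_zero, mul_zero, zero_pow] at hp
    have hdesc := descent_lemma f gradf L hL.le hdiff hlip (v (t + 1)) (u (t + 1))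
    have hcoef : L / 2 ≤ 1 / (2 * μ t) := by
      have h1 : L * μ t < 1 := by
        have := (hμlt t)
        rw [lt_div_iff₀ hL] at this; linarith
      rw [div_le_div_iff₀ (by norm_num) (mul_pos two_pos (hμpos t))]
      nlinarith [hμpos t]
    have hnn : (0:ℝ) ≤ ‖u (t + 1) - v (t + 1)‖ ^ 2 := by positivity
    have : L / 2 * ‖u (t + 1) - v (t + 1)‖ ^ 2 ≤ 1 / (2 * μ t) * ‖u (t + 1) - v (t + 1)‖ ^ 2 := by
      gcongr
    simp only [hΨ]
    norm_num at hp ⊢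
    have h2 : 1 / (2 * μ t) = (μ t)⁻¹ * (1 / 2) := by
      field_simp
    rw [h2] at this
    linarith
  refine ⟨fun t => ⟨key t, hcorr t⟩, antitone_nat_of_succ_le fun t => ?_⟩
  exact (key t).trans (hcorr t)
end

section
/- Let H = EuclideanSpace ℝ (Fin n). Suppose u, v : ℕ → H and μ : ℕ → ℝ form a GCM trajectory, φ is lower semicontinuous, Ψ is coercive, and there are constants 0 < μ_min ≤ μ_max < 1/L with μ_min ≤ μ_t ≤ μ_max for all t. Then for every accumulation point u* of (u_t) (i.e., every u* such that u_{t_j} → u* along some strictly increasing sequence of indices t_j), 0 belongs to the limiting subdifferential of Ψ at u*: there exist a sequence x_j → u* with Ψ(x_j) → Ψ(u*) and a sequence ξ_j → 0 such that each ξ_j is a Fréchet subgradient of Ψ at x_j. -/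
open Filter Topology RealInnerProductSpace

/-- `ξ` is a Fréchet subgradient of `Ψ` at `x`:
`liminf_{y → x, y ≠ x} (Ψ(y) − Ψ(x) − ⟪ξ, y − x⟫)/‖y − x‖ ≥ 0`, expressed in the
standard equivalent ε-form. -/
def FrechetSubgradientAt {H : Type*} [NormedAddCommGroup H] [InnerProductSpace ℝ H]
    (Ψ : H → ℝ) (ξ x : H) : Prop :=
  ∀ ε > (0 : ℝ), ∀ᶠ y in 𝓝[≠] x, Ψ x + ⟪ξ, y - x⟫ - ε * ‖y - x‖ ≤ Ψ y

section Helpers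

variable {E : Type*} [NormedAddCommGroup E] [InnerProductSpace ℝ E] [CompleteSpace E]

/-- The descent lemma: a function with `L`-Lipschitz gradient satisfies a two-sided
quadratic bound. -/
lemma quad_bound_aux (f : E → ℝ) (gradf : E → E) (L : ℝ) (hL : 0 < L)
    (hdiff : ∀ x, HasGradientAt f (gradf x) x)
    (hlip : ∀ x y, ‖gradf x - gradf y‖ ≤ L * ‖x - y‖) (a b : E) :
    |f b - f a - ⟪gradf a, b - a⟫| ≤ L / 2 * ‖b - a‖ ^ 2 := by
  have hgc : Continuous gradf :=
    (LipschitzWith.of_dist_le_mul (K := ⟨L, hL.le⟩) (fun x y => by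
      rw [dist_eq_norm, dist_eq_norm]; exact hlip x y)).continuous
  set line : ℝ → E := fun t => a + t • (b - a) with hline
  have hlineC : Continuous line := by fun_prop
  have hlinederiv : ∀ t : ℝ, HasDerivAt line (b - a) t := by
    intro t
    have h := ((hasDerivAt_id t).smul_const (b - a)).const_add a
    rw [one_smul] at h; exact h
  set g : ℝ → ℝ := fun t => f (line t) with hg
  set g' : ℝ → ℝ := fun t => ⟪gradf (line t), b - a⟫ with hg'
  have hgderiv : ∀ t : ℝ, HasDerivAt g (g' t) t := by
    intro t
    have h1 := (hdiff (line t)).hasFDerivAt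
    have := h1.comp_hasDerivAt t (hlinederiv t)
    simpa [g, g', InnerProductSpace.toDual, Function.comp_def] using this
  have hg'c : Continuous g' := by
    apply Continuous.inner (hgc.comp hlineC) continuous_const
  have key : f b - f a = ∫ t in (0:ℝ)..1, g' t := by
    have := intervalIntegral.integral_eq_sub_of_hasDerivAt (f := g) (f' := g')
      (fun t _ => hgderiv t) (hg'c.intervalIntegrable 0 1)
    simp [g, line] at this
    rw [← this]
  have hg'0 : g' 0 = ⟪gradf a, b - a⟫ := by simp [g', line]
  have split : f b - f a - ⟪gradf a, b - a⟫ = ∫ t in (0:ℝ)..1, (g' t - g' 0) := by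
    rw [intervalIntegral.integral_sub (hg'c.intervalIntegrable 0 1)
      (intervalIntegrable_const), ← key, intervalIntegral.integral_const, hg'0]
    simp
  have bound : ∀ t ∈ Set.uIoc (0:ℝ) 1, ‖g' t - g' 0‖ ≤ (L * ‖b - a‖ ^ 2) * t := by
    intro t ht
    rw [Set.uIoc_of_le zero_le_one] at ht
    have h0t : 0 < t := ht.1
    have : g' t - g' 0 = ⟪gradf (line t) - gradf a, b - a⟫ := by
      rw [hg'0]; simp [g', inner_sub_left]
    rw [this, Real.norm_eq_abs]
    calc |⟪gradf (line t) - gradf a, b - a⟫| ≤ ‖gradf (line t) - gradf a‖ * ‖b - a‖ :=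
          abs_real_inner_le_norm _ _
      _ ≤ (L * ‖line t - a‖) * ‖b - a‖ := by
          exact mul_le_mul_of_nonneg_right (hlip _ _) (norm_nonneg _)
      _ = (L * ‖b - a‖ ^ 2) * t := by
          simp [line, norm_smul, abs_of_pos h0t]; ring
  have hint : ‖∫ t in (0:ℝ)..1, (g' t - g' 0)‖ ≤ |∫ t in (0:ℝ)..1, (L * ‖b - a‖ ^ 2) * t| := by
    apply intervalIntegral.norm_integral_le_abs_of_norm_le
    · filter_upwards [MeasureTheory.ae_restrict_mem measurableSet_uIoc] with t ht
      exact bound t ht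
    · exact (continuous_const.mul continuous_id).intervalIntegrable 0 1
  have hval : ∫ t in (0:ℝ)..1, (L * ‖b - a‖ ^ 2) * t = L / 2 * ‖b - a‖ ^ 2 := by
    rw [intervalIntegral.integral_const_mul, integral_id]
    ring
  rw [hval] at hint
  rw [split]
  calc |∫ t in (0:ℝ)..1, (g' t - g' 0)| = ‖∫ t in (0:ℝ)..1, (g' t - g' 0)‖ := rfl
    _ ≤ |L / 2 * ‖b - a‖ ^ 2| := hint
    _ = L / 2 * ‖b - a‖ ^ 2 := abs_of_nonneg (by positivity)

/-- A global quadratic lower bound yields a Fréchet subgradient. -/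
lemma frechet_of_quad_aux (Ψ : E → ℝ) (ξ x : E) (C : ℝ) (hC : 0 ≤ C)
    (h : ∀ y, Ψ x + ⟪ξ, y - x⟫ - C * ‖y - x‖ ^ 2 ≤ Ψ y) :
    FrechetSubgradientAt Ψ ξ x := by
  intro ε hε
  have hmem : Metric.ball x (ε / (C + 1)) ∈ 𝓝[≠] x :=
    nhdsWithin_le_nhds (Metric.ball_mem_nhds x (by positivity))
  filter_upwards [hmem] with y hy
  have hy' : ‖y - x‖ < ε / (C + 1) := by rwa [Metric.mem_ball, dist_eq_norm] at hy
  have h2 : C * ‖y - x‖ ≤ ε := by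
    have e1 : C * (ε / (C + 1)) = ε * (C / (C + 1)) := by ring
    have e2 : C / (C + 1) ≤ 1 := div_le_one_of_le₀ (by linarith) (by linarith)
    calc C * ‖y - x‖ ≤ C * (ε / (C + 1)) := mul_le_mul_of_nonneg_left hy'.le hC
      _ = ε * (C / (C + 1)) := e1
      _ ≤ ε * 1 := mul_le_mul_of_nonneg_left e2 hε.le
      _ = ε := mul_one ε
  have h1 : C * ‖y - x‖ ^ 2 ≤ ε * ‖y - x‖ := by
    nlinarith [norm_nonneg (y - x)]
  linarith [h y]

/-- Optimality of the prox-output yields a quadratic lower bound on `f + φ` with the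
explicit subgradient candidate. -/
lemma prox_subgrad_aux (f φ : E → ℝ) (gradf : E → E) (L : ℝ) (hL : 0 < L)
    (hdiff : ∀ x, HasGradientAt f (gradf x) x)
    (hlip : ∀ x y, ‖gradf x - gradf y‖ ≤ L * ‖x - y‖)
    (v uplus : E) (μ : ℝ) (hμ : 0 < μ)
    (hpo : IsProxOutput φ gradf v μ uplus) (y : E) :
    f uplus + φ uplus + ⟪gradf uplus - gradf v - (1 / μ) • (uplus - v), y - uplus⟫
      - (L / 2 + 1 / (2 * μ)) * ‖y - uplus‖ ^ 2 ≤ f y + φ y := by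
  have h1 := hpo y
  have hq := quad_bound_aux f gradf L hL hdiff hlip uplus y
  have hq' : f uplus + ⟪gradf uplus, y - uplus⟫ - L / 2 * ‖y - uplus‖ ^ 2 ≤ f y := by
    have := (abs_le.mp hq).1; linarith
  have hyv : y - v = (y - uplus) + (uplus - v) := by abel
  have e1 : ⟪gradf v, y - v⟫ = ⟪gradf v, y - uplus⟫ + ⟪gradf v, uplus - v⟫ := by
    rw [hyv, inner_add_right]
  have e2 : ‖y - v‖ ^ 2 = ‖y - uplus‖ ^ 2 + 2 * ⟪y - uplus, uplus - v⟫ + ‖uplus - v‖ ^ 2 := by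
    rw [hyv, norm_add_sq_real]
  have e3 : ⟪gradf uplus - gradf v - (1 / μ) • (uplus - v), y - uplus⟫
      = ⟪gradf uplus, y - uplus⟫ - ⟪gradf v, y - uplus⟫
        - (1 / μ) * ⟪uplus - v, y - uplus⟫ := by
    rw [inner_sub_left, inner_sub_left, real_inner_smul_left]
  have e4 : ⟪y - uplus, uplus - v⟫ = ⟪uplus - v, y - uplus⟫ := real_inner_comm _ _
  have e5 : 1 / (2 * μ) * ‖y - v‖ ^ 2
      = 1 / (2 * μ) * ‖y - uplus‖ ^ 2 + (1 / μ) * ⟪uplus - v, y - uplus⟫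
        + 1 / (2 * μ) * ‖uplus - v‖ ^ 2 := by
    rw [e2, e4]; field_simp
  rw [e3]
  rw [e1, e5] at h1
  linarith

end Helpers

/-- along a GCM trajectory on `EuclideanSpace ℝ (Fin n)` with `φ`
lower semicontinuous, `Ψ` coercive, and step sizes `0 < μ_min ≤ μ_t ≤ μ_max < 1/L`,
every accumulation point `u*` of `(u_t)` is such that `0` belongs to the limiting
subdifferential of `Ψ` at `u*`: there are `x_j → u*` with `Ψ(x_j) → Ψ(u*)` and
Fréchet subgradients `ξ_j` of `Ψ` at `x_j` with `ξ_j → 0`. -/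
theorem gcm_accumulation_point_is_critical
    {n : ℕ}
    (f φ : EuclideanSpace ℝ (Fin n) → ℝ)
    (gradf : EuclideanSpace ℝ (Fin n) → EuclideanSpace ℝ (Fin n))
    (L : ℝ) (hL : 0 < L)
    (hdiff : ∀ x, HasGradientAt f (gradf x) x)
    (hlip : ∀ x y, ‖gradf x - gradf y‖ ≤ L * ‖x - y‖)
    (Ψ : EuclideanSpace ℝ (Fin n) → ℝ) (hΨ : Ψ = fun x => f x + φ x)
    (hφlsc : LowerSemicontinuous φ)
    (hcoer : Tendsto Ψ (comap (fun x => ‖x‖) atTop) atTop)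
    (u v : ℕ → EuclideanSpace ℝ (Fin n)) (μ : ℕ → ℝ)
    (hμpos : ∀ t, 0 < μ t)
    (hcorr : ∀ t, Ψ (v (t + 1)) ≤ Ψ (u t))
    (hprox : ∀ t, IsProxOutput φ gradf (v (t + 1)) (μ t) (u (t + 1)))
    (μmin μmax : ℝ) (hμmin : 0 < μmin) (hminmax : μmin ≤ μmax)
    (hμmax : μmax < 1 / L)
    (hμ : ∀ t, μmin ≤ μ t ∧ μ t ≤ μmax)
    (ustar : EuclideanSpace ℝ (Fin n))
    (hacc : ∃ τ : ℕ → ℕ, StrictMono τ ∧ Tendsto (fun j => u (τ j)) atTop (𝓝 ustar)) :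
    ∃ x ξ : ℕ → EuclideanSpace ℝ (Fin n),
      Tendsto x atTop (𝓝 ustar) ∧
        Tendsto (fun j => Ψ (x j)) atTop (𝓝 (Ψ ustar)) ∧
          Tendsto ξ atTop (𝓝 0) ∧
            ∀ j, FrechetSubgradientAt Ψ (ξ j) (x j) := by
  obtain ⟨τ, hτmono, hτlim⟩ := hacc
  have hΨx : ∀ x, Ψ x = f x + φ x := fun x => by rw [hΨ]
  have hμmax0 : 0 < μmax := lt_of_lt_of_le hμmin hminmax
  have hfC : Continuous f := by
    rw [continuous_iff_continuousAt]
    exact fun x => (hdiff x).differentiableAt.continuousAt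
  have hgc : Continuous gradf :=
    (LipschitzWith.of_dist_le_mul (K := ⟨L, hL.le⟩) (fun x y => by
      rw [dist_eq_norm, dist_eq_norm]; exact hlip x y)).continuous
  have hΨlsc : LowerSemicontinuous Ψ := by
    rw [hΨ]; exact hfC.lowerSemicontinuous.add hφlsc
  -- positivity of the descent constant
  have hc : 0 < 1 / (2 * μmax) - L / 2 := by
    have h1 : μmax * L < 1 := by
      have := (lt_div_iff₀ hL).mp hμmax; linarith
    rw [sub_pos, div_lt_div_iff₀ (by norm_num) (by linarith)]
    nlinarith
  -- descent inequality
  have descent : ∀ t, Ψ (u (t + 1))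
      + (1 / (2 * μmax) - L / 2) * ‖u (t + 1) - v (t + 1)‖ ^ 2 ≤ Ψ (u t) := by
    intro t
    have hpo := hprox t (v (t + 1))
    simp only [sub_self, inner_zero_right, norm_zero] at hpo
    have hq := quad_bound_aux f gradf L hL hdiff hlip (v (t + 1)) (u (t + 1))
    have hq' : f (u (t + 1)) - f (v (t + 1))
        - ⟪gradf (v (t + 1)), u (t + 1) - v (t + 1)⟫
        ≤ L / 2 * ‖u (t + 1) - v (t + 1)‖ ^ 2 := (abs_le.mp hq).2
    have hmono : (1 / (2 * μmax) - L / 2) * ‖u (t + 1) - v (t + 1)‖ ^ 2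
        ≤ (1 / (2 * μ t) - L / 2) * ‖u (t + 1) - v (t + 1)‖ ^ 2 := by
      apply mul_le_mul_of_nonneg_right _ (sq_nonneg _)
      have h1 : 1 / (2 * μmax) ≤ 1 / (2 * μ t) :=
        one_div_le_one_div_of_le (by linarith [hμpos t]) (by linarith [(hμ t).2])
      linarith
    have hcorr' := hcorr t
    rw [hΨx (u (t + 1)), hΨx (u t)]
    rw [hΨx (v (t + 1)), hΨx (u t)] at hcorr'
    simp only [ne_eq, OfNat.ofNat_ne_zero, not_false_eq_true, zero_pow, mul_zero,
      add_zero] at hpo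
    nlinarith [hpo, hq', hmono, hcorr']
  have hanti : Antitone fun t => Ψ (u t) := by
    apply antitone_nat_of_succ_le
    intro t
    have h1 := descent t
    nlinarith [sq_nonneg ‖u (t + 1) - v (t + 1)‖, hc]
  -- lower bound
  have hlow : ∀ t, Ψ ustar ≤ Ψ (u t) := by
    intro t
    by_contra h
    push_neg at h
    have hev := hτlim.eventually (hΨlsc ustar (Ψ (u t)) h)
    have hev2 : ∀ᶠ j in atTop, t ≤ τ j :=
      eventually_atTop.mpr ⟨t, fun j hj => le_trans hj hτmono.le_apply⟩
    obtain ⟨j, h1, h2⟩ := (hev.and hev2).exists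
    exact absurd (hanti h2) (not_le.mpr h1)
  -- convergence of Ψ(u t)
  obtain ⟨l, hconv⟩ : ∃ l, Tendsto (fun t => Ψ (u t)) atTop (𝓝 l) :=
    ⟨_, tendsto_atTop_ciInf hanti ⟨Ψ ustar, by rintro y ⟨t, rfl⟩; exact hlow t⟩⟩
  have hdelta : Tendsto (fun t => Ψ (u t) - Ψ (u (t + 1))) atTop (𝓝 0) := by
    have h2 : Tendsto (fun t => Ψ (u (t + 1))) atTop (𝓝 l) :=
      hconv.comp (tendsto_add_atTop_nat 1)
    simpa using hconv.sub h2
  -- ‖u (t+1) - v (t+1)‖ → 0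
  have hd2 : Tendsto (fun t => ‖u (t + 1) - v (t + 1)‖ ^ 2) atTop (𝓝 0) := by
    have hsq : Tendsto (fun t => (1 / (2 * μmax) - L / 2) * ‖u (t + 1) - v (t + 1)‖ ^ 2)
        atTop (𝓝 0) := by
      apply squeeze_zero (fun t => mul_nonneg hc.le (sq_nonneg _))
        (fun t => by linarith [descent t]) hdelta
    have h3 := hsq.const_mul (1 / (2 * μmax) - L / 2)⁻¹
    rw [mul_zero] at h3
    have h4 : (fun t => (1 / (2 * μmax) - L / 2)⁻¹
        * ((1 / (2 * μmax) - L / 2) * ‖u (t + 1) - v (t + 1)‖ ^ 2))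
        = fun t => ‖u (t + 1) - v (t + 1)‖ ^ 2 := by
      funext t; rw [← mul_assoc, inv_mul_cancel₀ hc.ne', one_mul]
    rwa [h4] at h3
  have hd : Tendsto (fun t => ‖u (t + 1) - v (t + 1)‖) atTop (𝓝 0) := by
    have h1 : (fun t => ‖u (t + 1) - v (t + 1)‖)
        = fun t => Real.sqrt (‖u (t + 1) - v (t + 1)‖ ^ 2) :=
      funext fun t => (Real.sqrt_sq (norm_nonneg _)).symm
    rw [h1]
    have := (Real.continuous_sqrt.tendsto 0).comp hd2
    simpa [Function.comp_def] using this
  -- index bookkeeping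
  set T : ℕ → ℕ := fun j => τ (j + 1) - 1 with hTdef
  have hT : ∀ j, T j + 1 = τ (j + 1) := by
    intro j
    have h1 : 1 ≤ τ (j + 1) := le_trans (Nat.succ_le_succ (Nat.zero_le j)) hτmono.le_apply
    simp only [hTdef]
    omega
  have hTge : ∀ j, j ≤ T j := by
    intro j
    have : j + 1 ≤ τ (j + 1) := hτmono.le_apply
    simp only [hTdef]
    omega
  have hTtend : Tendsto T atTop atTop := tendsto_atTop_mono hTge tendsto_id
  have hx : Tendsto (fun j => u (T j + 1)) atTop (𝓝 ustar) := by
    have h1 : (fun j => u (T j + 1)) = fun j => u (τ (j + 1)) :=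
      funext fun j => by rw [hT]
    rw [h1]
    exact hτlim.comp (tendsto_add_atTop_nat 1)
  have hdT : Tendsto (fun j => ‖u (T j + 1) - v (T j + 1)‖) atTop (𝓝 0) := hd.comp hTtend
  have hdiffv : Tendsto (fun j => u (T j + 1) - v (T j + 1)) atTop (𝓝 0) :=
    tendsto_zero_iff_norm_tendsto_zero.mpr hdT
  have hv : Tendsto (fun j => v (T j + 1)) atTop (𝓝 ustar) := by
    have := hx.sub hdiffv
    simpa using this
  refine ⟨fun j => u (T j + 1),
    fun j => gradf (u (T j + 1)) - gradf (v (T j + 1))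
      - (1 / μ (T j)) • (u (T j + 1) - v (T j + 1)), hx, ?_, ?_, ?_⟩
  · -- Ψ (x j) → Ψ ustar
    rw [tendsto_order]
    constructor
    · intro a ha
      exact hx.eventually (hΨlsc ustar a ha)
    · intro a ha
      have t1 : Tendsto (fun j => f (u (T j + 1))) atTop (𝓝 (f ustar)) :=
        (hfC.tendsto ustar).comp hx
      have t2 : Tendsto (fun j => gradf (v (T j + 1))) atTop (𝓝 (gradf ustar)) :=
        (hgc.tendsto ustar).comp hv
      have t3 : Tendsto (fun j => ustar - v (T j + 1)) atTop (𝓝 0) := by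
        simpa using (tendsto_const_nhds (x := ustar)).sub hv
      have t4 : Tendsto (fun j => ⟪gradf (v (T j + 1)), ustar - v (T j + 1)⟫) atTop (𝓝 0) := by
        simpa using t2.inner t3
      have t5 : Tendsto (fun j => ⟪gradf (v (T j + 1)), u (T j + 1) - v (T j + 1)⟫)
          atTop (𝓝 0) := by
        simpa using t2.inner hdiffv
      have t6 : Tendsto (fun j => ‖ustar - v (T j + 1)‖ ^ 2) atTop (𝓝 0) := by
        have h1 : Tendsto (fun j => ‖ustar - v (T j + 1)‖) atTop (𝓝 0) := by
          simpa [Function.comp_def] using (continuous_norm.tendsto (0 : EuclideanSpace ℝ (Fin n))).comp t3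
        simpa using h1.pow 2
      have hg : Tendsto (fun j => Ψ ustar + ((f (u (T j + 1)) - f ustar)
          + ⟪gradf (v (T j + 1)), ustar - v (T j + 1)⟫
          - ⟪gradf (v (T j + 1)), u (T j + 1) - v (T j + 1)⟫
          + 1 / (2 * μmin) * ‖ustar - v (T j + 1)‖ ^ 2)) atTop (𝓝 (Ψ ustar)) := by
        have := tendsto_const_nhds (x := Ψ ustar) (f := atTop (α := ℕ)) |>.add
          ((((t1.sub_const (f ustar)).add t4).sub t5).add (t6.const_mul (1 / (2 * μmin))))
        simpa using this
      have hub : ∀ j, Ψ (u (T j + 1)) ≤ Ψ ustar + ((f (u (T j + 1)) - f ustar)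
          + ⟪gradf (v (T j + 1)), ustar - v (T j + 1)⟫
          - ⟪gradf (v (T j + 1)), u (T j + 1) - v (T j + 1)⟫
          + 1 / (2 * μmin) * ‖ustar - v (T j + 1)‖ ^ 2) := by
        intro j
        have hpo := hprox (T j) ustar
        have hb1 : 1 / (2 * μ (T j)) * ‖ustar - v (T j + 1)‖ ^ 2
            ≤ 1 / (2 * μmin) * ‖ustar - v (T j + 1)‖ ^ 2 := by
          apply mul_le_mul_of_nonneg_right _ (sq_nonneg _)
          exact one_div_le_one_div_of_le (by linarith) (by linarith [(hμ (T j)).1])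
        have hb2 : 0 ≤ 1 / (2 * μ (T j)) * ‖u (T j + 1) - v (T j + 1)‖ ^ 2 := by
          have := hμpos (T j); positivity
        rw [hΨx (u (T j + 1)), hΨx ustar]
        linarith [hpo, hb1, hb2]
      have hev := hg.eventually (gt_mem_nhds ha)
      filter_upwards [hev] with j hj
      exact lt_of_le_of_lt (hub j) hj
  · -- ξ → 0
    have tξ1 : Tendsto (fun j => gradf (u (T j + 1)) - gradf (v (T j + 1))) atTop (𝓝 0) := by
      have a1 := (hgc.tendsto ustar).comp hx
      have a2 := (hgc.tendsto ustar).comp hv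
      simpa using a1.sub a2
    have tξ2 : Tendsto (fun j => (1 / μ (T j)) • (u (T j + 1) - v (T j + 1))) atTop (𝓝 0) := by
      apply squeeze_zero_norm (a := fun j => (1 / μmin) * ‖u (T j + 1) - v (T j + 1)‖)
      · intro j
        rw [norm_smul]
        apply mul_le_mul_of_nonneg_right _ (norm_nonneg _)
        rw [Real.norm_eq_abs, abs_of_pos (by have := hμpos (T j); positivity)]
        exact one_div_le_one_div_of_le hμmin (hμ (T j)).1
      · simpa using hdT.const_mul (1 / μmin)
    simpa using tξ1.sub tξ2
  · -- Fréchet subgradients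
    intro j
    apply frechet_of_quad_aux Ψ _ _ (L / 2 + 1 / (2 * μ (T j)))
    · have := hμpos (T j); positivity
    · intro y
      have hkey := prox_subgrad_aux f φ gradf L hL hdiff hlip
        (v (T j + 1)) (u (T j + 1)) (μ (T j)) (hμpos (T j)) (hprox (T j)) y
      rw [hΨx (u (T j + 1)), hΨx y]
      linarith [hkey]
end

section
/- Let μ_min > 0, let (u_j), (v_j) be sequences in H and (μ_j) be step sizes with μ_j ≥ μ_min for all j, such that each u_j is a prox-output at (v_j, μ_j). Suppose u_j → u* and v_j → u* for some u* ∈ H. Then limsup_{j→∞} φ(u_j) ≤ φ(u*). -/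
open Filter Topology RealInnerProductSpace

/-- if `u_j` is a prox-output at `(v_j, μ_j)` with `μ_j ≥ μ_min > 0`,
and `u_j → u*`, `v_j → u*`, then `limsup_j φ(u_j) ≤ φ(u*)`. -/
theorem limsup_phi_le_of_prox_outputs
    {H : Type*} [NormedAddCommGroup H] [InnerProductSpace ℝ H] [CompleteSpace H]
    (f φ : H → ℝ) (gradf : H → H) (L : ℝ) (hL : 0 < L)
    (hdiff : ∀ x, HasGradientAt f (gradf x) x)
    (hlip : ∀ x y, ‖gradf x - gradf y‖ ≤ L * ‖x - y‖)
    (Ψ : H → ℝ) (hΨ : Ψ = fun x => f x + φ x)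
    (μmin : ℝ) (hμmin : 0 < μmin)
    (u v : ℕ → H) (μ : ℕ → ℝ) (hμ : ∀ j, μmin ≤ μ j)
    (hprox : ∀ j, IsProxOutput φ gradf (v j) (μ j) (u j))
    (ustar : H)
    (hu : Tendsto u atTop (𝓝 ustar)) (hv : Tendsto v atTop (𝓝 ustar)) :
    limsup (fun j => φ (u j)) atTop ≤ φ ustar := by
  set b : ℕ → ℝ := fun j =>
    φ ustar + ⟪gradf (v j), ustar - u j⟫ + 1 / (2 * μmin) * ‖ustar - v j‖ ^ 2 with hb
  have hμpos : ∀ j, 0 < μ j := fun j => lt_of_lt_of_le hμmin (hμ j)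
  -- upper bound
  have hub : ∀ j, φ (u j) ≤ b j := by
    intro j
    have h := hprox j ustar
    have hjp := hμpos j
    have h1 : (0:ℝ) ≤ 1 / (2 * μ j) * ‖u j - v j‖ ^ 2 :=
      mul_nonneg (by positivity) (by positivity)
    have h2 : 1 / (2 * μ j) * ‖ustar - v j‖ ^ 2 ≤ 1 / (2 * μmin) * ‖ustar - v j‖ ^ 2 := by
      gcongr
      exact hμ j
    have hinner : ⟪gradf (v j), ustar - v j⟫ - ⟪gradf (v j), u j - v j⟫
        = ⟪gradf (v j), ustar - u j⟫ := by
      rw [← inner_sub_right]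
      congr 1
      abel
    simp only [hb]
    linarith
  -- gradf is continuous along v
  have hgrad : Tendsto (fun j => gradf (v j)) atTop (𝓝 (gradf ustar)) := by
    rw [tendsto_iff_norm_sub_tendsto_zero]
    have h0 : Tendsto (fun j => L * ‖v j - ustar‖) atTop (𝓝 (L * 0)) := by
      exact (tendsto_const_nhds.mul
        ((tendsto_iff_norm_sub_tendsto_zero.mp hv)))
    rw [mul_zero] at h0
    exact squeeze_zero (fun j => norm_nonneg _) (fun j => hlip _ _) h0
  -- b tends to φ ustar
  have hbt : Tendsto b atTop (𝓝 (φ ustar)) := by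
    have h1 : Tendsto (fun j => ⟪gradf (v j), ustar - u j⟫) atTop
        (𝓝 (⟪gradf ustar, ustar - ustar⟫ : ℝ)) :=
      hgrad.inner (tendsto_const_nhds.sub hu)
    rw [sub_self, inner_zero_right] at h1
    have h2 : Tendsto (fun j => 1 / (2 * μmin) * ‖ustar - v j‖ ^ 2) atTop
        (𝓝 (1 / (2 * μmin) * ‖ustar - ustar‖ ^ 2)) :=
      tendsto_const_nhds.mul (((tendsto_const_nhds.sub hv).norm).pow 2)
    rw [sub_self, norm_zero] at h2
    have h3 : Tendsto b atTop (𝓝 (φ ustar + 0 + 1 / (2 * μmin) * (0:ℝ) ^ 2)) :=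
      (tendsto_const_nhds.add h1).add h2
    norm_num at h3
    exact h3
  have hbdd : IsBoundedUnder (· ≤ ·) atTop b := hbt.isBoundedUnder_le
  -- lower bound via prox at index 0 gives coboundedness
  set ℓ : ℕ → ℝ := fun j =>
    φ (u 0) + ⟪gradf (v 0), u 0 - v 0⟫ + 1 / (2 * μ 0) * ‖u 0 - v 0‖ ^ 2
      - ⟪gradf (v 0), u j - v 0⟫ - 1 / (2 * μ 0) * ‖u j - v 0‖ ^ 2 with hl
  have hlb : ∀ j, ℓ j ≤ φ (u j) := by
    intro j
    have h := hprox 0 (u j)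
    simp only [hl]
    linarith
  have hlt : Tendsto ℓ atTop (𝓝 (φ (u 0) + ⟪gradf (v 0), u 0 - v 0⟫
      + 1 / (2 * μ 0) * ‖u 0 - v 0‖ ^ 2
      - ⟪gradf (v 0), ustar - v 0⟫ - 1 / (2 * μ 0) * ‖ustar - v 0‖ ^ 2)) := by
    exact ((tendsto_const_nhds.sub
      (tendsto_const_nhds.inner (hu.sub tendsto_const_nhds))).sub
      (tendsto_const_nhds.mul (((hu.sub tendsto_const_nhds).norm).pow 2)))
  obtain ⟨c, hc⟩ := hlt.isBoundedUnder_ge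
  rw [eventually_map] at hc
  have hcob : IsCoboundedUnder (· ≤ ·) atTop (fun j => φ (u j)) :=
    isCoboundedUnder_le_of_eventually_le atTop
      (hc.mono (fun j hj => le_trans hj (hlb j)))
  calc limsup (fun j => φ (u j)) atTop
      ≤ limsup b atTop := limsup_le_limsup (Eventually.of_forall hub) hcob hbdd
    _ = φ ustar := hbt.limsup_eq
end

section
/- Let μ_min > 0, let (u_j), (v_j) be sequences in H and (μ_j) be step sizes with μ_j ≥ μ_min for all j, such that each u_j is a prox-output at (v_j, μ_j). Suppose u_j → u*, v_j → u*, and φ is lower semicontinuous at u*. Then φ(u_j) → φ(u*) and Ψ(u_j) → Ψ(u*) as j → ∞. -/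
open Filter Topology RealInnerProductSpace

/-- if `u_j` is a prox-output at `(v_j, μ_j)` with `μ_j ≥ μ_min > 0`,
`u_j → u*`, `v_j → u*`, and `φ` is lower semicontinuous at `u*`, then
`φ(u_j) → φ(u*)` and `Ψ(u_j) → Ψ(u*)`. -/
theorem phi_and_Psi_converge_of_prox_outputs
    {H : Type*} [NormedAddCommGroup H] [InnerProductSpace ℝ H] [CompleteSpace H]
    (f φ : H → ℝ) (gradf : H → H) (L : ℝ) (hL : 0 < L)
    (hdiff : ∀ x, HasGradientAt f (gradf x) x)
    (hlip : ∀ x y, ‖gradf x - gradf y‖ ≤ L * ‖x - y‖)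
    (Ψ : H → ℝ) (hΨ : Ψ = fun x => f x + φ x)
    (μmin : ℝ) (hμmin : 0 < μmin)
    (u v : ℕ → H) (μ : ℕ → ℝ) (hμ : ∀ j, μmin ≤ μ j)
    (hprox : ∀ j, IsProxOutput φ gradf (v j) (μ j) (u j))
    (ustar : H)
    (hu : Tendsto u atTop (𝓝 ustar)) (hv : Tendsto v atTop (𝓝 ustar))
    (hlsc : LowerSemicontinuousAt φ ustar) :
    Tendsto (fun j => φ (u j)) atTop (𝓝 (φ ustar)) ∧
      Tendsto (fun j => Ψ (u j)) atTop (𝓝 (Ψ ustar)) := by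
    -- continuity of gradf along v
  have hgv : Tendsto (fun j => gradf (v j)) atTop (𝓝 (gradf ustar)) := by
    rw [tendsto_iff_norm_sub_tendsto_zero]
    have h0 : Tendsto (fun j => L * ‖v j - ustar‖) atTop (𝓝 0) := by
      have : Tendsto (fun j => ‖v j - ustar‖) atTop (𝓝 0) := by
        simpa using (tendsto_iff_norm_sub_tendsto_zero.1 hv)
      simpa using this.const_mul L
    refine squeeze_zero (fun j => norm_nonneg _) (fun j => hlip _ _) h0
  have hinner : Tendsto (fun j => ⟪gradf (v j), ustar - u j⟫) atTop (𝓝 0) := by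
    have := Tendsto.inner (𝕜 := ℝ) hgv ((tendsto_const_nhds (x := ustar)).sub hu)
    simpa using this
  have hnorm2 : Tendsto (fun j => 1 / (2 * μmin) * ‖ustar - v j‖ ^ 2) atTop (𝓝 0) := by
    have h1 : Tendsto (fun j => ‖ustar - v j‖) atTop (𝓝 0) := by
      have := ((tendsto_const_nhds (x := ustar)).sub hv).norm
      simpa using this
    have := ((h1.pow 2).const_mul (1 / (2 * μmin)))
    simpa using this
  have he : Tendsto (fun j => φ ustar + (⟪gradf (v j), ustar - u j⟫ +
      1 / (2 * μmin) * ‖ustar - v j‖ ^ 2)) atTop (𝓝 (φ ustar)) := by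
    simpa using tendsto_const_nhds.add (hinner.add hnorm2)
  -- upper bound
  have hub : ∀ j, φ (u j) ≤ φ ustar + (⟪gradf (v j), ustar - u j⟫ +
      1 / (2 * μmin) * ‖ustar - v j‖ ^ 2) := by
    intro j
    have hμj : 0 < μ j := lt_of_lt_of_le hμmin (hμ j)
    have hkey := hprox j ustar
    have hc : 1 / (2 * μ j) ≤ 1 / (2 * μmin) := by
      apply one_div_le_one_div_of_le (by linarith)
      linarith [hμ j]
    have h1 : 1 / (2 * μ j) * ‖ustar - v j‖ ^ 2 ≤ 1 / (2 * μmin) * ‖ustar - v j‖ ^ 2 :=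
      mul_le_mul_of_nonneg_right hc (by positivity)
    have h2 : 0 ≤ 1 / (2 * μ j) * ‖u j - v j‖ ^ 2 := by positivity
    have h3 : ⟪gradf (v j), ustar - v j⟫ - ⟪gradf (v j), u j - v j⟫
        = ⟪gradf (v j), ustar - u j⟫ := by
      rw [← inner_sub_right]; congr 1; abel
    nlinarith [hkey]
  have hφ : Tendsto (fun j => φ (u j)) atTop (𝓝 (φ ustar)) := by
    rw [tendsto_order]
    constructor
    · intro c hc
      exact hu.eventually (hlsc c hc)
    · intro c hc
      filter_upwards [he.eventually (tendsto_id.eventually_lt_const hc)] with j hj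
      exact lt_of_le_of_lt (hub j) hj
  refine ⟨hφ, ?_⟩
  have hf : Tendsto (fun j => f (u j)) atTop (𝓝 (f ustar)) :=
    ((hdiff ustar).continuousAt.tendsto).comp hu
  rw [hΨ]
  exact hf.add hφ
end

section
/- Suppose u, v : ℕ → H and μ : ℕ → ℝ form a GCM trajectory, φ is lower semicontinuous, Ψ is bounded below, and there are constants 0 < μ_min ≤ μ_max < 1/L with μ_min ≤ μ_t ≤ μ_max for all t. Let Ψ* := lim_{t→∞} Ψ(u_t) (which exists by monotonicity and boundedness). Then every accumulation point u* of (u_t) satisfies Ψ(u*) = Ψ*; i.e., the objective value at any accumulation point equals the limit of the objective values. -/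
open Filter Topology RealInnerProductSpace

lemma gcm_descent_lemma {H : Type*} [NormedAddCommGroup H] [InnerProductSpace ℝ H]
    [CompleteSpace H]
    (f : H → ℝ) (gradf : H → H) (L : ℝ)
    (hdiff : ∀ x, HasGradientAt f (gradf x) x)
    (hlip : ∀ x y, ‖gradf x - gradf y‖ ≤ L * ‖x - y‖)
    (x y : H) :
    f y ≤ f x + ⟪gradf x, y - x⟫ + L / 2 * ‖y - x‖ ^ 2 := by
  have hgc : Continuous gradf := by
    have : LipschitzWith (Real.toNNReal L) gradf := by
      apply LipschitzWith.of_dist_le_mul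
      intro a b
      rw [dist_eq_norm, dist_eq_norm]
      exact (hlip a b).trans (mul_le_mul_of_nonneg_right (Real.le_coe_toNNReal L) (norm_nonneg _))
    exact this.continuous
  set γ : ℝ → H := fun s => x + s • (y - x) with hγ
  have hγc : Continuous γ := by fun_prop
  have hg : ∀ s : ℝ, HasDerivAt (fun s => f (γ s)) ⟪gradf (γ s), y - x⟫ s := by
    intro s
    have h1 : HasDerivAt γ (y - x) s := by
      simpa [hγ] using ((hasDerivAt_id s).smul_const (y - x)).const_add x
    have h2 := (hdiff (γ s)).hasFDerivAt.comp_hasDerivAt s h1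
    exact h2.congr_deriv (by simp)
  have hcont : Continuous fun s : ℝ => ⟪gradf (γ s), y - x⟫ :=
    Continuous.inner (hgc.comp hγc) continuous_const
  have hint : ∫ s in (0:ℝ)..1, ⟪gradf (γ s), y - x⟫ = f y - f x := by
    have := intervalIntegral.integral_eq_sub_of_hasDerivAt
      (f := fun s => f (γ s)) (f' := fun s => ⟪gradf (γ s), y - x⟫)
      (a := 0) (b := 1) (fun s _ => hg s)
      (hcont.intervalIntegrable 0 1)
    simpa [hγ] using this
  have hbound : ∀ s ∈ Set.Icc (0:ℝ) 1,
      ⟪gradf (γ s) - gradf x, y - x⟫ ≤ L * ‖y - x‖ ^ 2 * s := by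
    intro s hs
    calc ⟪gradf (γ s) - gradf x, y - x⟫ ≤ ‖gradf (γ s) - gradf x‖ * ‖y - x‖ :=
          real_inner_le_norm _ _
      _ ≤ (L * ‖γ s - x‖) * ‖y - x‖ :=
          mul_le_mul_of_nonneg_right (hlip _ _) (norm_nonneg _)
      _ = L * ‖y - x‖ ^ 2 * s := by
          have : γ s - x = s • (y - x) := by simp [hγ]
          rw [this, norm_smul, Real.norm_eq_abs, abs_of_nonneg hs.1]
          ring
  have hdiffint : ∫ s in (0:ℝ)..1, ⟪gradf (γ s) - gradf x, y - x⟫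
      ≤ ∫ s in (0:ℝ)..1, L * ‖y - x‖ ^ 2 * s := by
    apply intervalIntegral.integral_mono_on (by norm_num)
    · exact ((Continuous.inner ((hgc.comp hγc).sub continuous_const)
        continuous_const)).intervalIntegrable 0 1
    · exact (Continuous.intervalIntegrable (by fun_prop) 0 1)
    · exact hbound
  have hrhs : ∫ s in (0:ℝ)..1, L * ‖y - x‖ ^ 2 * s = L / 2 * ‖y - x‖ ^ 2 := by
    rw [intervalIntegral.integral_const_mul, integral_id]
    ring
  have hlhs : ∫ s in (0:ℝ)..1, ⟪gradf (γ s) - gradf x, y - x⟫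
      = (f y - f x) - ⟪gradf x, y - x⟫ := by
    have h1 : ∀ s : ℝ, ⟪gradf (γ s) - gradf x, y - x⟫
        = ⟪gradf (γ s), y - x⟫ - ⟪gradf x, y - x⟫ := fun s => inner_sub_left _ _ _
    simp_rw [h1]
    rw [intervalIntegral.integral_sub (hcont.intervalIntegrable 0 1)
      (intervalIntegrable_const), hint]
    simp
  linarith [hrhs ▸ hlhs ▸ hdiffint]

/-- along a GCM trajectory with `φ` lower semicontinuous, `Ψ`
bounded below, and `0 < μ_min ≤ μ_t ≤ μ_max < 1/L`, letting `Ψ*` be the limit of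
the (convergent) sequence `Ψ(u_t)`, every accumulation point `u*` of `(u_t)`
satisfies `Ψ(u*) = Ψ*`. -/
theorem gcm_objective_value_at_accumulation_points
    {H : Type*} [NormedAddCommGroup H] [InnerProductSpace ℝ H] [CompleteSpace H]
    (f φ : H → ℝ) (gradf : H → H) (L : ℝ) (hL : 0 < L)
    (hdiff : ∀ x, HasGradientAt f (gradf x) x)
    (hlip : ∀ x y, ‖gradf x - gradf y‖ ≤ L * ‖x - y‖)
    (Ψ : H → ℝ) (hΨ : Ψ = fun x => f x + φ x)
    (hφlsc : LowerSemicontinuous φ)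
    (hbdd : ∃ m : ℝ, ∀ x, m ≤ Ψ x)
    (u v : ℕ → H) (μ : ℕ → ℝ)
    (hμpos : ∀ t, 0 < μ t)
    (hcorr : ∀ t, Ψ (v (t + 1)) ≤ Ψ (u t))
    (hprox : ∀ t, IsProxOutput φ gradf (v (t + 1)) (μ t) (u (t + 1)))
    (μmin μmax : ℝ) (hμmin : 0 < μmin) (hminmax : μmin ≤ μmax)
    (hμmax : μmax < 1 / L)
    (hμ : ∀ t, μmin ≤ μ t ∧ μ t ≤ μmax)
    (Ψstar : ℝ) (hΨstar : Tendsto (fun t => Ψ (u t)) atTop (𝓝 Ψstar)) :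
    ∀ ustar : H,
      (∃ τ : ℕ → ℕ, StrictMono τ ∧ Tendsto (fun j => u (τ j)) atTop (𝓝 ustar)) →
        Ψ ustar = Ψstar := by
  rintro ustar ⟨τ, hτmono, hτlim⟩
  have hΨu : ∀ z, Ψ z = f z + φ z := fun z => by rw [hΨ]
  have hμmax0 : 0 < μmax := lt_of_lt_of_le hμmin hminmax
  have hgc : Continuous gradf := by
    have : LipschitzWith (Real.toNNReal L) gradf := by
      apply LipschitzWith.of_dist_le_mul
      intro a b
      rw [dist_eq_norm, dist_eq_norm]
      exact (hlip a b).trans (mul_le_mul_of_nonneg_right (Real.le_coe_toNNReal L) (norm_nonneg _))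
    exact this.continuous
  have hfc : Continuous f :=
    continuous_iff_continuousAt.mpr fun x => (hdiff x).hasFDerivAt.continuousAt
  set c : ℝ := 1 / (2 * μmax) - L / 2 with hc
  have hcpos : 0 < c := by
    have h1 : μmax * L < 1 := (lt_div_iff₀ hL).mp hμmax
    have h2 : L / 2 < 1 / (2 * μmax) := by
      rw [div_lt_div_iff₀ (by norm_num) (by positivity)]
      nlinarith
    simpa [hc] using sub_pos.mpr h2
  clear_value c
  -- per-step sufficient decrease
  have hstep : ∀ t, Ψ (u (t + 1)) + c * ‖u (t + 1) - v (t + 1)‖ ^ 2 ≤ Ψ (u t) := by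
    intro t
    have hp : φ (u (t + 1)) + ⟪gradf (v (t + 1)), u (t + 1) - v (t + 1)⟫
        + 1 / (2 * μ t) * ‖u (t + 1) - v (t + 1)‖ ^ 2 ≤ φ (v (t + 1)) := by
      simpa using hprox t (v (t + 1))
    have hdsc := gcm_descent_lemma f gradf L hdiff hlip (v (t + 1)) (u (t + 1))
    have hn : (0:ℝ) ≤ ‖u (t + 1) - v (t + 1)‖ ^ 2 := by positivity
    have hmono : 1 / (2 * μmax) * ‖u (t + 1) - v (t + 1)‖ ^ 2
        ≤ 1 / (2 * μ t) * ‖u (t + 1) - v (t + 1)‖ ^ 2 := by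
      apply mul_le_mul_of_nonneg_right _ hn
      exact one_div_le_one_div_of_le (by linarith [hμpos t]) (by linarith [(hμ t).2])
    have hcv := hcorr t
    rw [hΨu (u (t+1)), hΨu (u t)]
    rw [hΨu (v (t+1)), hΨu (u t)] at hcv
    have hcexp : c * ‖u (t + 1) - v (t + 1)‖ ^ 2
        = 1 / (2 * μmax) * ‖u (t + 1) - v (t + 1)‖ ^ 2
          - L / 2 * ‖u (t + 1) - v (t + 1)‖ ^ 2 := by rw [hc]; ring
    linarith
  -- the displacement tends to zero
  have hΨshift : Tendsto (fun t => Ψ (u (t + 1))) atTop (𝓝 Ψstar) :=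
    (tendsto_add_atTop_iff_nat 1).mpr hΨstar
  have hdiff0 : Tendsto (fun t => Ψ (u t) - Ψ (u (t + 1))) atTop (𝓝 0) := by
    simpa using hΨstar.sub hΨshift
  have hsq0 : Tendsto (fun t => ‖u (t + 1) - v (t + 1)‖ ^ 2) atTop (𝓝 0) := by
    have hc0 : Tendsto (fun t => c * ‖u (t + 1) - v (t + 1)‖ ^ 2) atTop (𝓝 0) := by
      apply squeeze_zero (fun t => by positivity)
        (fun t => by linarith [hstep t]) hdiff0
    have := hc0.const_mul c⁻¹
    simpa [← mul_assoc, inv_mul_cancel₀ (ne_of_gt hcpos)] using this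
  have hd0 : Tendsto (fun t => u (t + 1) - v (t + 1)) atTop (𝓝 0) := by
    rw [tendsto_zero_iff_norm_tendsto_zero]
    have := (Real.continuous_sqrt.tendsto 0).comp hsq0
    simpa [Function.comp_def, Real.sqrt_sq_eq_abs] using this
  have hd0' : Tendsto (fun t => u t - v t) atTop (𝓝 0) :=
    (tendsto_add_atTop_iff_nat 1).mp hd0
  have hdτ : Tendsto (fun j => u (τ j) - v (τ j)) atTop (𝓝 0) :=
    hd0'.comp hτmono.tendsto_atTop
  have hvτ : Tendsto (fun j => v (τ j)) atTop (𝓝 ustar) := by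
    have := hτlim.sub hdτ
    simpa using this
  have hΨτ : Tendsto (fun j => Ψ (u (τ j))) atTop (𝓝 Ψstar) :=
    hΨstar.comp hτmono.tendsto_atTop
  -- lower bound: Ψ ustar ≤ Ψstar, by lower semicontinuity of Ψ
  have hΨlsc : LowerSemicontinuous Ψ := by
    rw [hΨ]
    exact fun x => (hfc.continuousAt.lowerSemicontinuousAt).add (hφlsc x)
  have hlow : Ψ ustar ≤ Ψstar := by
    by_contra h
    push_neg at h
    set y := (Ψstar + Ψ ustar) / 2 with hy
    have hy1 : y < Ψ ustar := by rw [hy]; linarith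
    have hy2 : Ψstar < y := by rw [hy]; linarith
    have hev : ∀ᶠ j in atTop, y < Ψ (u (τ j)) :=
      hτlim.eventually (hΨlsc ustar y hy1)
    have : y ≤ Ψstar := ge_of_tendsto hΨτ (hev.mono fun j hj => le_of_lt hj)
    linarith
  -- upper bound
  set E : ℕ → ℝ := fun j =>
    ⟪gradf (v (τ j)), ustar - u (τ j)⟫ + 1 / (2 * μmin) * ‖ustar - v (τ j)‖ ^ 2 with hE
  have hE0 : Tendsto E atTop (𝓝 0) := by
    have hF : Continuous fun p : H × H =>
        ⟪gradf p.2, ustar - p.1⟫ + 1 / (2 * μmin) * ‖ustar - p.2‖ ^ 2 := by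
      apply Continuous.add
      · exact Continuous.inner (hgc.comp continuous_snd)
          (continuous_const.sub continuous_fst)
      · fun_prop
    have hpair : Tendsto (fun j => (u (τ j), v (τ j))) atTop (𝓝 (ustar, ustar)) :=
      hτlim.prodMk_nhds hvτ
    have := (hF.tendsto (ustar, ustar)).comp hpair
    simpa [hE, Function.comp_def] using this
  have hkey : ∀ j, 1 ≤ j → Ψ (u (τ j)) ≤ f (u (τ j)) + φ ustar + E j := by
    intro j hj
    have hτj : 1 ≤ τ j := le_trans hj (hτmono.le_apply)
    obtain ⟨t, ht⟩ : ∃ t, τ j = t + 1 := ⟨τ j - 1, (Nat.succ_pred_eq_of_pos hτj).symm⟩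
    have hp := hprox t ustar
    have hn1 : (0:ℝ) ≤ ‖u (t + 1) - v (t + 1)‖ ^ 2 := by positivity
    have hμt : 0 < 1 / (2 * μ t) := by have := hμpos t; positivity
    have hsplit : ⟪gradf (v (t + 1)), ustar - v (t + 1)⟫
        - ⟪gradf (v (t + 1)), u (t + 1) - v (t + 1)⟫
        = ⟪gradf (v (t + 1)), ustar - u (t + 1)⟫ := by
      rw [← inner_sub_right]
      congr 1
      abel
    have hmono2 : 1 / (2 * μ t) * ‖ustar - v (t + 1)‖ ^ 2
        ≤ 1 / (2 * μmin) * ‖ustar - v (t + 1)‖ ^ 2 := by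
      apply mul_le_mul_of_nonneg_right _ (by positivity)
      exact one_div_le_one_div_of_le (by linarith) (by linarith [(hμ t).1])
    have hEj : E j = ⟪gradf (v (t + 1)), ustar - u (t + 1)⟫
        + 1 / (2 * μmin) * ‖ustar - v (t + 1)‖ ^ 2 := by rw [hE]; simp [ht]
    rw [ht, hΨu (u (t + 1)), hEj]
    nlinarith [mul_nonneg (le_of_lt hμt) hn1]
  have hup : Ψstar ≤ Ψ ustar := by
    have hrhs : Tendsto (fun j => f (u (τ j)) + φ ustar + E j) atTop
        (𝓝 (f ustar + φ ustar)) := by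
      have h1 : Tendsto (fun j => f (u (τ j))) atTop (𝓝 (f ustar)) :=
        (hfc.tendsto ustar).comp hτlim
      have := (h1.add_const (φ ustar)).add hE0
      simpa using this
    have : Ψstar ≤ f ustar + φ ustar := by
      apply le_of_tendsto_of_tendsto hΨτ hrhs
      filter_upwards [eventually_ge_atTop 1] with j hj
      exact hkey j hj
    rw [hΨu ustar]; exact this
  linarith
end

section
/- Let v ∈ H, let μ > 0, and let u₊ be a prox-output at (v, μ). Then the vector ξ := ∇f(u₊) − ∇f(v) − (1/μ)(u₊ − v) is a Fréchet subgradient of Ψ at u₊. -/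
open Filter Topology RealInnerProductSpace

/-- if `u₊` is a prox-output at `(v, μ)` with `μ > 0`, then
`ξ := ∇f(u₊) − ∇f(v) − (1/μ)(u₊ − v)` is a Fréchet subgradient of `Ψ` at `u₊`. -/
theorem prox_output_frechet_subgradient
    {H : Type*} [NormedAddCommGroup H] [InnerProductSpace ℝ H] [CompleteSpace H]
    (f φ : H → ℝ) (gradf : H → H) (L : ℝ) (hL : 0 < L)
    (hdiff : ∀ x, HasGradientAt f (gradf x) x)
    (hlip : ∀ x y, ‖gradf x - gradf y‖ ≤ L * ‖x - y‖)
    (Ψ : H → ℝ) (hΨ : Ψ = fun x => f x + φ x)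
    (v : H) (μ : ℝ) (hμ : 0 < μ) (uplus : H)
    (hprox : IsProxOutput φ gradf v μ uplus) :
    FrechetSubgradientAt Ψ (gradf uplus - gradf v - (1 / μ) • (uplus - v)) uplus := by
  intro ε hε
  have h1 : ∀ᶠ y in 𝓝 uplus, |f y - f uplus - ⟪gradf uplus, y - uplus⟫| ≤ (ε/2) * ‖y - uplus‖ := by
    have h2 := (hdiff uplus).hasFDerivAt.isLittleO.bound (by linarith : (0:ℝ) < ε/2)
    filter_upwards [h2] with y hy
    simpa [InnerProductSpace.toDual_apply_apply, Real.norm_eq_abs] using hy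
  have h2 : ∀ᶠ y in 𝓝 uplus, ‖y - uplus‖ ≤ ε * μ := by
    have := Metric.closedBall_mem_nhds uplus (by positivity : (0:ℝ) < ε * μ)
    filter_upwards [this] with y hy
    simpa [Metric.mem_closedBall, dist_eq_norm] using hy
  filter_upwards [h1.filter_mono nhdsWithin_le_nhds, h2.filter_mono nhdsWithin_le_nhds]
    with y hy1 hy2
  have hprox' := hprox y
  have hnorm : ‖y - v‖ ^ 2 = ‖y - uplus‖ ^ 2 + 2 * ⟪y - uplus, uplus - v⟫ + ‖uplus - v‖ ^ 2 := by
    have : y - v = (y - uplus) + (uplus - v) := by abel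
    rw [this, @norm_add_sq_real]
  have hinner : ⟪gradf v, y - v⟫ - ⟪gradf v, uplus - v⟫ = ⟪gradf v, y - uplus⟫ := by
    rw [← inner_sub_right]; congr 1; abel
  have hxi : ⟪gradf uplus - gradf v - (1 / μ) • (uplus - v), y - uplus⟫
      = ⟪gradf uplus, y - uplus⟫ - ⟪gradf v, y - uplus⟫ - (1/μ) * ⟪uplus - v, y - uplus⟫ := by
    simp [inner_sub_left, inner_smul_left]
  have habs := abs_le.mp hy1
  have hn : (0:ℝ) ≤ ‖y - uplus‖ := norm_nonneg _
  have hquad : 1 / (2 * μ) * ‖y - uplus‖ ^ 2 ≤ (ε/2) * ‖y - uplus‖ := by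
    rw [pow_two, ← mul_assoc]
    apply mul_le_mul_of_nonneg_right _ hn
    rw [div_mul_eq_mul_div, one_mul, div_le_iff₀ (by positivity)]
    nlinarith
  have key : 1/(2*μ) * ‖y - v‖^2 = 1/(2*μ) * ‖y - uplus‖^2 + 1/μ * ⟪uplus - v, y - uplus⟫
      + 1/(2*μ) * ‖uplus - v‖^2 := by
    rw [hnorm, real_inner_comm]; field_simp
  simp only [hΨ, hxi]
  linarith [hprox', hinner, habs.1, hquad, key]
end
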